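/- arXiv:2401.11917 — 2 statements merged into one kernel-verified Lean document; each statement's English description precedes it below -/
import Mathlib

section
/- An element F ∈ C¹ lies in the image d(C⁰) (i.e., F = f′ for some f ∈ L[v] with f(0), f(1) ∈ ℂ[[z]]) if and only if ∫₀¹F ∈ ℂ[[z]], i.e. every coefficient of a strictly negative power of z in ∫₀¹F = Σ_k F_k/(k+1) vanishes. (In particular the closed 1-forms z^{-k} dv, k ≥ 1, are not exact in ℂ{{z}}.) -/
/-!
The polynomial antiderivative `∑ₖ Fₖ v^{k+1}/(k+1)` of `F` vanishes at `v = 0` and takes the value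
`∫₀¹ F` at `v = 1`, so it is a preimage of `F` in `C⁰` exactly when `∫₀¹ F ∈ ℂ[[z]]`. Conversely, any
`f` with `f′ = F` differs from this antiderivative by a constant, whence `∫₀¹ F = f(1) - f(0)`,
a difference of power series.
-/

noncomputable section

open Polynomial

/-- Membership in `ℂ[[z]] ⊆ ℂ((z))`: all coefficients in strictly negative degrees vanish. -/
def inP (x : LaurentSeries ℂ) : Prop := ∀ n : ℤ, n < 0 → x.coeff n = 0

/-- `∫₀¹ F` for `F = Σ_k F_k v^k`, namely `Σ_k F_k / (k+1)`. -/
def intg (F : Polynomial (LaurentSeries ℂ)) : LaurentSeries ℂ :=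
  ∑ k ∈ Finset.range (F.natDegree + 1), F.coeff k / ((k : LaurentSeries ℂ) + 1)

instance LaurentSeries.instCharZero {K : Type*} [Field K] [CharZero K] :
    CharZero (LaurentSeries K) :=
  charZero_of_injective_algebraMap (algebraMap K (LaurentSeries K)).injective

namespace Polynomial

variable {K : Type*} [Field K]

def antiderivative (F : K[X]) : K[X] :=
  ∑ k ∈ Finset.range (F.natDegree + 1), C (F.coeff k / (k + 1)) * X ^ (k + 1)

theorem eval_zero_antiderivative (F : K[X]) : (antiderivative F).eval 0 = 0 := by
  simp [antiderivative, eval_finsetSum]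

theorem eval_one_antiderivative (F : K[X]) :
    (antiderivative F).eval 1 = ∑ k ∈ Finset.range (F.natDegree + 1), F.coeff k / (k + 1) := by
  simp [antiderivative, eval_finsetSum]

theorem derivative_antiderivative [CharZero K] (F : K[X]) : derivative (antiderivative F) = F := by
  conv_rhs => rw [F.as_sum_range]
  rw [antiderivative, map_sum]
  refine Finset.sum_congr rfl fun k _ => ?_
  rw [derivative_C_mul_X_pow, Nat.cast_add_one, div_mul_cancel₀ _ (Nat.cast_add_one_ne_zero k),
    add_tsub_cancel_right, C_mul_X_pow_eq_monomial]

theorem eval_one_antiderivative_derivative [CharZero K] (f : K[X]) :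
    (antiderivative (derivative f)).eval 1 = f.eval 1 - f.eval 0 := by
  obtain ⟨c, hc⟩ : ∃ c, antiderivative (derivative f) - f = C c :=
    ⟨_, eq_C_of_derivative_eq_zero (by rw [derivative_sub, derivative_antiderivative, sub_self])⟩
  have h1 := congrArg (eval 1) hc
  have h0 := congrArg (eval 0) hc
  simp only [eval_sub, eval_C, eval_zero_antiderivative] at h0 h1
  linear_combination h1 - h0

end Polynomial

theorem inP_sub {x y : LaurentSeries ℂ} (hx : inP x) (hy : inP y) : inP (x - y) := fun n hn => by
  rw [HahnSeries.coeff_sub, hx n hn, hy n hn, sub_zero]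

theorem intg_eq_eval_one_antiderivative (F : Polynomial (LaurentSeries ℂ)) :
    intg F = (antiderivative F).eval 1 :=
  (eval_one_antiderivative F).symm

/-- `F ∈ C¹` lies in `d(C⁰)` if and only if `∫₀¹ F` has no strictly negative powers of `z`,
i.e. `∫₀¹ F ∈ ℂ[[z]]`. -/
theorem raviolo_exactness_criterion (F : Polynomial (LaurentSeries ℂ)) :
    (∃ f : Polynomial (LaurentSeries ℂ),
        inP (f.eval 0) ∧ inP (f.eval 1) ∧ F = derivative f) ↔ inP (intg F) := by
  constructor
  · rintro ⟨f, h0, h1, rfl⟩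
    rw [intg_eq_eval_one_antiderivative, eval_one_antiderivative_derivative]
    exact inP_sub h1 h0
  · intro h
    refine ⟨antiderivative F, ?_, ?_, (derivative_antiderivative F).symm⟩
    · rw [eval_zero_antiderivative]
      exact fun n _ => HahnSeries.coeff_zero
    · rwa [← intg_eq_eval_one_antiderivative]

end
end

section
/- One has P_s(Σ_{τ ∈ S_{N+1} : s precedes N+1 in τ} u_τ) = v · Σ_{σ ∈ S_N} u_σ, where 's precedes N+1 in τ' means the position of s in τ is smaller than that of N+1. Consequently, modulo the ideals generated by Σ_{σ∈S_N} u_σ − 1 and Σ_{τ∈S_{N+1}} u_τ − 1 respectively, the algebra map q_s (determined by v ↦ Σ_{τ : s precedes N+1 in τ} u_τ and u_σ ↦ Σ_{τ ∈ π_N^{-1}(σ)} u_τ) is a section of P_s: the composite P_s ∘ q_s is the identity on the quotient ring ℂ[v][u_σ : σ ∈ S_N]/⟨Σ_σ u_σ − 1⟩. -/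
/-!
Every `τ ∈ S_{N+1}` is obtained in exactly one way by inserting `N+1` at some position `j`
into `σ = π_N(τ)`, so sums over `S_{N+1}` split into sums over `σ` and `j`. If `i` is the
position of `s` in `σ`, only `j = i` (`N+1` just before `s`) and `j = i+1` (just after `s`)
survive `P_s`, contributing `(1-v) u_σ` and `v u_σ`. Hence `P_s` sends the sum over the fibre
`π_N⁻¹(σ)` to `u_σ`, while among the `τ` in which `s` precedes `N+1` only `j = i+1` survives.
So `P_s ∘ q_s` is the substitution `v ↦ v · Σ_σ u_σ`, and `p(v c) - p(v)` is divisible by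
`v c - v = v (c - 1)`.
-/

noncomputable section

open scoped Classical

/-- Total orders on `{1,…,n}` are identified with bijections `τ : Fin n ≃ Fin n`,
`τ k` being the `k`-th smallest element. -/
abbrev TotalOrd (n : ℕ) := Equiv.Perm (Fin n)

/-- `a` immediately precedes `b` in `τ`: they occupy consecutive positions `k, k+1`. -/
def immPrec {n : ℕ} (τ : TotalOrd (n + 1)) (a b : Fin (n + 1)) : Prop :=
  ∃ k : Fin n, τ k.castSucc = a ∧ τ k.succ = b

/-- `a` precedes `b` in `τ`: the position of `a` is smaller than that of `b`. -/
def prec {n : ℕ} (τ : TotalOrd n) (a b : Fin n) : Prop := τ.symm a < τ.symm b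

/-- `π_N : S_{N+1} → S_N`: delete the entry `N+1`. -/
def delLast {N : ℕ} (τ : TotalOrd (N + 1)) : TotalOrd N :=
  Tuple.sort (fun a : Fin N => τ.symm a.castSucc)

/-- The algebra map `P_s : ℂ[u_τ : τ ∈ S_{N+1}] → ℂ[v][u_σ : σ ∈ S_N]`. -/
def Ps (N : ℕ) (s : Fin N) :
    MvPolynomial (TotalOrd (N + 1)) ℂ →ₐ[ℂ]
      Polynomial (MvPolynomial (TotalOrd N) ℂ) :=
  MvPolynomial.aeval fun τ : TotalOrd (N + 1) =>
    if immPrec τ (Fin.last N) s.castSucc then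
      (1 - Polynomial.X) * Polynomial.C (MvPolynomial.X (delLast τ))
    else if immPrec τ s.castSucc (Fin.last N) then
      Polynomial.X * Polynomial.C (MvPolynomial.X (delLast τ))
    else 0

/-- The algebra map `q_s : ℂ[v][u_σ : σ ∈ S_N] → ℂ[u_τ : τ ∈ S_{N+1}]` determined by
`v ↦ Σ_{τ : s precedes N+1 in τ} u_τ` and `u_σ ↦ Σ_{τ ∈ π_N⁻¹(σ)} u_τ`. -/
def qs (N : ℕ) (s : Fin N) :
    Polynomial (MvPolynomial (TotalOrd N) ℂ) →+* MvPolynomial (TotalOrd (N + 1)) ℂ :=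
  Polynomial.eval₂RingHom
    (MvPolynomial.aeval fun σ : TotalOrd N =>
      (∑ τ ∈ Finset.univ.filter (fun τ => delLast τ = σ), MvPolynomial.X τ) :
        MvPolynomial (TotalOrd N) ℂ →ₐ[ℂ] MvPolynomial (TotalOrd (N + 1)) ℂ).toRingHom
    (∑ τ ∈ Finset.univ.filter
        (fun τ : TotalOrd (N + 1) => prec τ s.castSucc (Fin.last N)), MvPolynomial.X τ)

namespace Polynomial

theorem eval₂_X_mul_C_sub_self_mem_span {R : Type*} [CommRing R] (c : R) (p : Polynomial R) :
    p.eval₂ C (X * C c) - p ∈ Ideal.span {C c - 1} := by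
  have h := sub_dvd_eval_sub (X * C c) X (p.map C)
  rw [eval_map, eval_map, eval₂_C_X, show X * C c - X = X * (C c - 1) by ring] at h
  exact Ideal.mem_span_singleton.mpr (dvd_trans (dvd_mul_left _ _) h)

end Polynomial

namespace Fin

variable {n : ℕ}

theorem exists_eq_castSucc_and_succAbove_eq_succ_iff (j : Fin (n + 1)) (i : Fin n) :
    (∃ k : Fin n, j = k.castSucc ∧ j.succAbove i = k.succ) ↔ j = i.castSucc := by
  constructor
  · rintro ⟨k, rfl, h⟩
    rw [← succAbove_castSucc_self k] at h
    rw [succAbove_right_injective h]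
  · rintro rfl
    exact ⟨i, rfl, succAbove_castSucc_self i⟩

theorem exists_succAbove_eq_castSucc_and_eq_succ_iff (j : Fin (n + 1)) (i : Fin n) :
    (∃ k : Fin n, j.succAbove i = k.castSucc ∧ j = k.succ) ↔ j = i.succ := by
  constructor
  · rintro ⟨k, h, rfl⟩
    rw [← succAbove_succ_self k] at h
    rw [succAbove_right_injective h]
  · rintro rfl
    exact ⟨i, succAbove_succ_self i, rfl⟩

end Fin

section Insertion

open Finset

variable {N : ℕ}

theorem immPrec_iff_symm {n : ℕ} (τ : TotalOrd (n + 1)) (a b : Fin (n + 1)) :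
    immPrec τ a b ↔ ∃ k : Fin n, τ.symm a = k.castSucc ∧ τ.symm b = k.succ := by
  simp only [immPrec, Equiv.symm_apply_eq]
  exact exists_congr fun _ => and_congr eq_comm eq_comm

/-- The order obtained from `σ` by inserting `N+1` at position `j`. -/
def insertLast (σ : TotalOrd N) (j : Fin (N + 1)) : TotalOrd (N + 1) :=
  (finSuccEquiv' j).trans ((Equiv.optionCongr σ).trans (finSuccEquiv' (Fin.last N)).symm)

theorem insertLast_apply_succAbove (σ : TotalOrd N) (j : Fin (N + 1)) (k : Fin N) :
    insertLast σ j (j.succAbove k) = (σ k).castSucc := by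
  simp [insertLast, finSuccEquiv'_succAbove, finSuccEquiv'_symm_some, Fin.succAbove_last]

theorem insertLast_symm_last (σ : TotalOrd N) (j : Fin (N + 1)) :
    (insertLast σ j).symm (Fin.last N) = j := by
  simp [Equiv.symm_apply_eq, insertLast, finSuccEquiv'_at]

theorem insertLast_symm_castSucc (σ : TotalOrd N) (j : Fin (N + 1)) (a : Fin N) :
    (insertLast σ j).symm a.castSucc = j.succAbove (σ.symm a) := by
  rw [Equiv.symm_apply_eq, insertLast_apply_succAbove, Equiv.apply_symm_apply]

theorem delLast_insertLast (σ : TotalOrd N) (j : Fin (N + 1)) :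
    delLast (insertLast σ j) = σ := by
  have hpos (k : Fin N) : (insertLast σ j).symm (σ k).castSucc = j.succAbove k := by
    rw [insertLast_symm_castSucc, Equiv.symm_apply_apply]
  refine (Tuple.eq_sort_iff.mpr ⟨fun a b hab => ?_, fun a b hab heq => ?_⟩).symm
  · simpa only [Function.comp_apply, hpos] using (Fin.strictMono_succAbove j).monotone hab
  · simp only [hpos] at heq
    exact absurd (Fin.succAbove_right_injective heq) hab.ne

theorem insertLast_bijective :
    Function.Bijective fun p : TotalOrd N × Fin (N + 1) => insertLast p.1 p.2 := by
  refine (Fintype.bijective_iff_injective_and_card _).mpr ⟨?_, ?_⟩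
  · rintro ⟨σ, j⟩ ⟨σ', j'⟩ h
    have h' : insertLast σ j = insertLast σ' j' := h
    have hσ := congrArg delLast h'
    have hj := congrArg (fun τ => τ.symm (Fin.last N)) h'
    simp only [delLast_insertLast, insertLast_symm_last] at hσ hj
    rw [hσ, hj]
  · simp [Fintype.card_perm, Nat.factorial_succ, mul_comm]

theorem sum_filter_eq_sum_insertLast {M : Type*} [AddCommMonoid M]
    (p : TotalOrd (N + 1) → Prop) [DecidablePred p] (g : TotalOrd (N + 1) → M) :
    ∑ τ ∈ univ.filter p, g τ =
      ∑ σ : TotalOrd N, ∑ j, if p (insertLast σ j) then g (insertLast σ j) else 0 := by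
  rw [sum_filter, ← Fintype.sum_prod_type']
  exact (Function.Bijective.sum_comp insertLast_bijective
    (fun τ => if p τ then g τ else 0)).symm

theorem immPrec_insertLast_last_left (σ : TotalOrd N) (j : Fin (N + 1)) (s : Fin N) :
    immPrec (insertLast σ j) (Fin.last N) s.castSucc ↔ j = (σ.symm s).castSucc := by
  rw [immPrec_iff_symm, insertLast_symm_last, insertLast_symm_castSucc,
    Fin.exists_eq_castSucc_and_succAbove_eq_succ_iff]

theorem immPrec_insertLast_last_right (σ : TotalOrd N) (j : Fin (N + 1)) (s : Fin N) :
    immPrec (insertLast σ j) s.castSucc (Fin.last N) ↔ j = (σ.symm s).succ := by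
  rw [immPrec_iff_symm, insertLast_symm_last, insertLast_symm_castSucc,
    Fin.exists_succAbove_eq_castSucc_and_eq_succ_iff]

theorem prec_insertLast (σ : TotalOrd N) (j : Fin (N + 1)) (s : Fin N) :
    prec (insertLast σ j) s.castSucc (Fin.last N) ↔ (σ.symm s).castSucc < j := by
  rw [prec, insertLast_symm_castSucc, insertLast_symm_last, Fin.succAbove_lt_iff_castSucc_lt]

end Insertion

section

open Finset Polynomial

variable {N : ℕ}

theorem Ps_X_insertLast (s : Fin N) (σ : TotalOrd N) (j : Fin (N + 1)) :
    Ps N s (MvPolynomial.X (insertLast σ j)) =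
      if j = (σ.symm s).castSucc then (1 - X) * C (MvPolynomial.X σ)
      else if j = (σ.symm s).succ then X * C (MvPolynomial.X σ)
      else 0 := by
  simp only [Ps, MvPolynomial.aeval_X, delLast_insertLast, immPrec_insertLast_last_left,
    immPrec_insertLast_last_right]

theorem Ps_sum_delLast_eq (s : Fin N) (σ : TotalOrd N) :
    Ps N s (∑ τ ∈ univ.filter (fun τ => delLast τ = σ), MvPolynomial.X τ) =
      C (MvPolynomial.X σ) := by
  have hne : (σ.symm s).castSucc ≠ (σ.symm s).succ := Fin.castSucc_lt_succ.ne
  rw [map_sum, sum_filter_eq_sum_insertLast, Fintype.sum_eq_single σ]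
  · simp only [delLast_insertLast, if_true]
    rw [Fintype.sum_eq_add _ _ hne, Ps_X_insertLast, Ps_X_insertLast, if_pos rfl, if_neg hne.symm,
      if_pos rfl]
    · ring
    · rintro j ⟨hj, hj'⟩
      rw [Ps_X_insertLast, if_neg hj, if_neg hj']
  · intro σ' hσ'
    simp only [delLast_insertLast, hσ', if_false, sum_const_zero]

theorem Ps_sum_prec_last (s : Fin N) :
    Ps N s (∑ τ ∈ univ.filter
        (fun τ : TotalOrd (N + 1) => prec τ s.castSucc (Fin.last N)), MvPolynomial.X τ) =
      X * C (∑ σ : TotalOrd N, MvPolynomial.X σ) := by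
  rw [map_sum, sum_filter_eq_sum_insertLast, map_sum, mul_sum]
  refine sum_congr rfl fun σ _ => ?_
  rw [Fintype.sum_eq_single (σ.symm s).succ]
  · rw [if_pos ((prec_insertLast σ _ s).mpr Fin.castSucc_lt_succ), Ps_X_insertLast,
      if_neg Fin.castSucc_lt_succ.ne', if_pos rfl]
  · intro j hj
    split_ifs with hprec
    · rw [prec_insertLast] at hprec
      rw [Ps_X_insertLast, if_neg hprec.ne', if_neg hj]
    · rfl

theorem Ps_qs_C (s : Fin N) (m : MvPolynomial (TotalOrd N) ℂ) :
    Ps N s (qs N s (C m)) = C m := by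
  have h : (Ps N s).comp (MvPolynomial.aeval fun σ : TotalOrd N =>
      (∑ τ ∈ univ.filter (fun τ => delLast τ = σ), MvPolynomial.X τ)) = CAlgHom := by
    refine MvPolynomial.algHom_ext fun σ => ?_
    rw [AlgHom.comp_apply, MvPolynomial.aeval_X, Ps_sum_delLast_eq]
    rfl
  simpa [qs] using congr($h m)

theorem Ps_comp_qs (s : Fin N) :
    (Ps N s : MvPolynomial (TotalOrd (N + 1)) ℂ →+* _).comp (qs N s) =
      eval₂RingHom C (X * C (∑ σ : TotalOrd N, MvPolynomial.X σ)) := by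
  refine ringHom_ext (fun m => ?_) ?_
  · simpa using Ps_qs_C s m
  · simpa [qs] using Ps_sum_prec_last s

end

/-- `P_s(Σ_{τ : s ≺_τ N+1} u_τ) = v · Σ_σ u_σ`, and modulo the ideal generated by
`Σ_σ u_σ - 1`, the composite `P_s ∘ q_s` is the identity. -/
theorem Ps_qs_section (N : ℕ) (s : Fin N) :
    Ps N s (∑ τ ∈ Finset.univ.filter
        (fun τ : TotalOrd (N + 1) => prec τ s.castSucc (Fin.last N)), MvPolynomial.X τ)
      = Polynomial.X * Polynomial.C (∑ σ : TotalOrd N, MvPolynomial.X σ)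
    ∧ ∀ p : Polynomial (MvPolynomial (TotalOrd N) ℂ),
        Ps N s (qs N s p) - p ∈
          Ideal.span {Polynomial.C (∑ σ : TotalOrd N, MvPolynomial.X σ) - 1} := by
  refine ⟨Ps_sum_prec_last s, fun p => ?_⟩
  have h : Ps N s (qs N s p) = p.eval₂ Polynomial.C
      (Polynomial.X * Polynomial.C (∑ σ : TotalOrd N, MvPolynomial.X σ)) :=
    congr($(Ps_comp_qs s) p)
  rw [h]
  exact Polynomial.eval₂_X_mul_C_sub_self_mem_span _ p

end
end
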